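/- For any k-tuple (ℓ_1, ..., ℓ_k) of positive integers, the α-Lüroth cylinder set C_α(ℓ_1,...,ℓ_k) is a closed interval with endpoints [ℓ_1,...,ℓ_k]_α and [ℓ_1,...,ℓ_k + 1]_α, and its Lebesgue measure equals the product a_{ℓ_1}·a_{ℓ_2}⋯a_{ℓ_k}. -/

import Mathlib

open Filter Set MeasureTheory Topology

noncomputable section

/-- Data of a countable interval partition `α` of `(0,1]`: `a n` is the Lebesgue
measure of the `n`-th atom `A_n` (for `n ≥ 1`), the atoms are ordered from right
to left and their measures sum to `1`. -/
structure LurothData where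
  a : ℕ → ℝ
  pos : ∀ n, 1 ≤ n → 0 < a n
  summ : Summable fun n => a (n + 1)
  total : (∑' n : ℕ, a (n + 1)) = 1

namespace LurothData

variable (P : LurothData)

/-- the `n`-th tail `t_n = Σ_{k ≥ n} a_k`. -/
def t (n : ℕ) : ℝ := ∑' k : ℕ, P.a (n + k)

/-- the index `n` of the atom `A_n = (t_{n+1}, t_n]` containing `x` (and `0` if none). -/
def digit (x : ℝ) : ℕ := sInf {n | 1 ≤ n ∧ x ∈ Set.Ioc (P.t (n + 1)) (P.t n)}

/-- the α-Lüroth map `L_α`. -/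
def map (x : ℝ) : ℝ :=
  if P.digit x = 0 then 0 else (P.t (P.digit x) - x) / P.a (P.digit x)

/-- `dseq P n x` is the `(n+1)`-st α-Lüroth digit `ℓ_{n+1}(x)`. -/
def dseq (n : ℕ) (x : ℝ) : ℕ := P.digit (P.map^[n] x)

/-- the finite α-Lüroth expansion `[ℓ_1, …, ℓ_k]_α`. -/
def val : List ℕ → ℝ
  | [] => 0
  | l :: ls => P.t l - P.a l * val ls

/-- the α-Lüroth cylinder set `C_α(ℓ_1, …, ℓ_k)` (as the set of points whose
first `k` digits are prescribed). -/
def cyl (ls : List ℕ) : Set ℝ :=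
  {x | x ∈ Set.Ioc (0 : ℝ) 1 ∧ ∀ i : Fin ls.length, P.dseq i x = ls.get i}

end LurothData

/-- A (discretely sampled) slowly varying function. -/
def SlowlyVaryingN (ψ : ℕ → ℝ) : Prop :=
  ∀ c : ℕ, 0 < c → Tendsto (fun n => ψ (c * n) / ψ n) atTop (𝓝 1)

/-- `α` is expansive of exponent `θ`: `t_n = ψ(n) n^{-θ}` with `ψ` slowly varying. -/
def LurothData.Expansive (P : LurothData) (θ : ℝ) : Prop :=
  ∃ ψ : ℕ → ℝ, (∀ n, 0 < ψ n) ∧ SlowlyVaryingN ψ ∧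
    ∀ n, 1 ≤ n → P.t n = ψ n * (n : ℝ) ^ (-θ)

/-- `α` is eventually decreasing. -/
def LurothData.EventuallyDecreasing (P : LurothData) : Prop :=
  ∃ N : ℕ, ∀ n, N ≤ n → P.a (n + 1) < P.a n

/-- the α-Good set `G_N^{(α)}`. -/
def LurothData.goodSet (P : LurothData) (N : ℕ) : Set ℝ :=
  {x | x ∈ Set.Ioc (0 : ℝ) 1 ∧ ∀ n : ℕ, N < P.dseq n x}

/-- `G_∞^{(α)}`: points whose digits tend to infinity. -/
def LurothData.Ginf (P : LurothData) : Set ℝ :=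
  {x | x ∈ Set.Ioc (0 : ℝ) 1 ∧ Tendsto (fun n => P.dseq n x) atTop atTop}

/-- `F_∞^{(α)}`: points whose digits are non-decreasing and tend to infinity. -/
def LurothData.Finf (P : LurothData) : Set ℝ :=
  {x | x ∈ P.Ginf ∧ ∀ n : ℕ, P.dseq n x ≤ P.dseq (n + 1) x}

end

/-!
On the atom `A_n = (t_{n+1}, t_n]` the map `L_α` is the decreasing affine bijection
`x ↦ (t_n - x) / a_n` onto `[0, 1)`, with inverse branch `y ↦ t_n - a_n y`, and
`[n, ℓ_1, …]_α` is the image of `[ℓ_1, …]_α` under that branch. So if `C_α(ls)` contains the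
open and lies in the closed interval between two points, `C_α(n :: ls)` does the same for their
images, whose distance is scaled by `a_n`. Induction on the digits in front of the last one,
starting from `C_α(ℓ) = A_ℓ`, squeezes the cylinder between the open and the closed interval
with endpoints `[ℓ_1, …, ℓ_k]_α` and `[ℓ_1, …, ℓ_k + 1]_α`, at distance `a_{ℓ_1} ⋯ a_{ℓ_k}`;
such a squeeze determines both the closure and the Lebesgue measure.
-/

section Sandwich

variable {α : Type*} {s : Set α} {a b : α}

theorem closure_eq_uIcc_of_uIoo_subset [TopologicalSpace α] [LinearOrder α] [OrderTopology α]
    [DenselyOrdered α] (hab : a ≠ b) (hIoo : uIoo a b ⊆ s) (hIcc : s ⊆ uIcc a b) :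
    closure s = uIcc a b :=
  subset_antisymm (closure_minimal hIcc isClosed_Icc) (closure_uIoo hab ▸ closure_mono hIoo)

theorem measure_eq_of_uIoo_subset [MeasurableSpace α] [LinearOrder α] {μ : Measure α}
    [NullSingletonClass μ] (hIoo : uIoo a b ⊆ s) (hIcc : s ⊆ uIcc a b) :
    μ s = μ (uIcc a b) :=
  le_antisymm (measure_mono hIcc) ((measure_congr Ioo_ae_eq_Icc).ge.trans (measure_mono hIoo))

end Sandwich

section Affine

variable {c r u v y : ℝ}

theorem sub_mul_mem_uIcc_iff (hr : 0 < r) :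
    c - r * y ∈ uIcc (c - r * u) (c - r * v) ↔ y ∈ uIcc u v := by
  rcases le_total u v with h | h
  · rw [uIcc_of_le h, uIcc_of_ge (by nlinarith), mem_Icc, mem_Icc]
    constructor <;> rintro ⟨h₁, h₂⟩ <;> constructor <;> nlinarith
  · rw [uIcc_of_ge h, uIcc_of_le (by nlinarith), mem_Icc, mem_Icc]
    constructor <;> rintro ⟨h₁, h₂⟩ <;> constructor <;> nlinarith

theorem sub_mul_mem_uIoo_iff (hr : 0 < r) :
    c - r * y ∈ uIoo (c - r * u) (c - r * v) ↔ y ∈ uIoo u v := by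
  rcases le_total u v with h | h
  · rw [uIoo_of_le h, uIoo_of_ge (by nlinarith), mem_Ioo, mem_Ioo]
    constructor <;> rintro ⟨h₁, h₂⟩ <;> constructor <;> nlinarith
  · rw [uIoo_of_ge h, uIoo_of_le (by nlinarith), mem_Ioo, mem_Ioo]
    constructor <;> rintro ⟨h₁, h₂⟩ <;> constructor <;> nlinarith

end Affine

namespace LurothData

variable (P : LurothData) {x y : ℝ} {m n l : ℕ} {ls : List ℕ}

theorem summable_a_add (hn : 1 ≤ n) : Summable fun k => P.a (n + k) := by
  obtain ⟨m, rfl⟩ := Nat.exists_eq_add_of_le hn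
  exact ((summable_nat_add_iff m).2 P.summ).congr fun k => by ring_nf

theorem t_eq_a_add_t_succ (hn : 1 ≤ n) : P.t n = P.a n + P.t (n + 1) := by
  simp only [t, (P.summable_a_add hn).tsum_eq_zero_add, add_zero, add_right_comm n 1, add_assoc]

theorem t_one : P.t 1 = 1 := by
  simpa only [t, add_comm 1] using P.total

theorem t_nonneg (hn : 1 ≤ n) : 0 ≤ P.t n :=
  tsum_nonneg fun k => (P.pos (n + k) (hn.trans (Nat.le_add_right n k))).le

theorem t_succ_lt (hn : 1 ≤ n) : P.t (n + 1) < P.t n := by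
  linarith [P.t_eq_a_add_t_succ hn, P.pos n hn]

theorem t_antitoneOn : AntitoneOn P.t {n | 1 ≤ n} :=
  antitoneOn_nat_Ici_of_succ_le fun _ hn => (P.t_succ_lt hn).le

def atom (n : ℕ) : Set ℝ := Ioc (P.t (n + 1)) (P.t n)

theorem atom_subset_Ioc (hn : 1 ≤ n) : P.atom n ⊆ Ioc 0 1 := fun _ hx =>
  ⟨(P.t_nonneg (Nat.le_succ_of_le hn)).trans_lt hx.1,
    hx.2.trans (P.t_one ▸ P.t_antitoneOn (Nat.le_refl 1) hn hn)⟩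

theorem le_of_mem_atom (hm : 1 ≤ m) (hxm : x ∈ P.atom m) (hxn : x ∈ P.atom n) : m ≤ n := by
  by_contra! hnm
  have : P.t m ≤ P.t (n + 1) := P.t_antitoneOn (Nat.le_add_left 1 n) hm hnm
  linarith [hxn.1, hxm.2]

theorem digit_eq_iff (hn : 1 ≤ n) : P.digit x = n ↔ x ∈ P.atom n := by
  constructor
  · rintro rfl
    have hne : {k | 1 ≤ k ∧ x ∈ P.atom k}.Nonempty := by
      by_contra hempty
      rw [not_nonempty_iff_eq_empty] at hempty
      simp only [digit, atom] at hn hempty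
      rw [hempty, Nat.sInf_empty] at hn
      omega
    exact (Nat.sInf_mem hne).2
  · intro hx
    have hset : {k | 1 ≤ k ∧ x ∈ P.atom k} = {n} := by
      refine subset_antisymm (fun k ⟨hk, hxk⟩ => ?_) (singleton_subset_iff.2 ⟨hn, hx⟩)
      exact le_antisymm (P.le_of_mem_atom hk hxk hx) (P.le_of_mem_atom hn hx hxk)
    exact (congrArg sInf hset).trans (csInf_singleton n)

theorem map_of_mem_atom (hn : 1 ≤ n) (hx : x ∈ P.atom n) : P.map x = (P.t n - x) / P.a n := by
  rw [map, (P.digit_eq_iff hn).2 hx, if_neg (by omega)]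

theorem t_sub_a_mul_map (hn : 1 ≤ n) (hx : x ∈ P.atom n) : P.t n - P.a n * P.map x = x := by
  rw [P.map_of_mem_atom hn hx, mul_div_cancel₀ _ (P.pos n hn).ne']
  ring

theorem t_sub_a_mul_mem_atom (hn : 1 ≤ n) (hy : y ∈ Ico 0 1) : P.t n - P.a n * y ∈ P.atom n := by
  have ha := P.pos n hn
  have ht := P.t_eq_a_add_t_succ hn
  exact ⟨by nlinarith [hy.2], by nlinarith [hy.1]⟩

theorem map_t_sub_a_mul (hn : 1 ≤ n) (hy : y ∈ Ico 0 1) : P.map (P.t n - P.a n * y) = y := by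
  rw [P.map_of_mem_atom hn (P.t_sub_a_mul_mem_atom hn hy), sub_sub_cancel,
    mul_div_cancel_left₀ _ (P.pos n hn).ne']

theorem cyl_subset_Ioc : P.cyl ls ⊆ Ioc 0 1 := fun _ hx => hx.1

theorem mem_cyl_cons_iff_digit :
    x ∈ P.cyl (m :: ls) ↔
      x ∈ Ioc 0 1 ∧ P.digit x = m ∧ ∀ i : Fin ls.length, P.dseq i (P.map x) = ls.get i := by
  simp only [cyl, mem_ofPred_eq, List.length_cons, Fin.forall_fin_succ]
  rfl

theorem cyl_singleton (hl : 1 ≤ l) : P.cyl [l] = P.atom l := by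
  ext x
  simp only [mem_cyl_cons_iff_digit, P.digit_eq_iff hl, List.length_nil, IsEmpty.forall_iff,
    and_true, and_iff_right_iff_imp]
  exact fun hx => P.atom_subset_Ioc hl hx

theorem mem_cyl_cons_iff (hm : 1 ≤ m) (hls : ls ≠ []) (hpos : ∀ k ∈ ls, 1 ≤ k) :
    x ∈ P.cyl (m :: ls) ↔ x ∈ P.atom m ∧ P.map x ∈ P.cyl ls := by
  obtain ⟨n, ls, rfl⟩ := List.exists_cons_of_ne_nil hls
  have hn : 1 ≤ n := hpos n List.mem_cons_self
  rw [mem_cyl_cons_iff_digit, P.digit_eq_iff hm]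
  constructor
  · rintro ⟨-, hx, hdigits⟩
    exact ⟨hx, P.atom_subset_Ioc hn ((P.digit_eq_iff hn).1 (hdigits ⟨0, by simp⟩)), hdigits⟩
  · rintro ⟨hx, -, hdigits⟩
    exact ⟨P.atom_subset_Ioc hm hx, hx, hdigits⟩

theorem cyl_cons_subset_uIcc (hm : 1 ≤ m) (hls : ls ≠ []) (hpos : ∀ k ∈ ls, 1 ≤ k) {u v : ℝ}
    (h : P.cyl ls ⊆ uIcc u v) :
    P.cyl (m :: ls) ⊆ uIcc (P.t m - P.a m * u) (P.t m - P.a m * v) := by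
  intro x hx
  obtain ⟨hxm, hmap⟩ := (P.mem_cyl_cons_iff hm hls hpos).1 hx
  rw [← P.t_sub_a_mul_map hm hxm]
  exact (sub_mul_mem_uIcc_iff (P.pos m hm)).2 (h hmap)

theorem uIoo_subset_cyl_cons (hm : 1 ≤ m) (hls : ls ≠ []) (hpos : ∀ k ∈ ls, 1 ≤ k) {u v : ℝ}
    (h : uIoo u v ⊆ P.cyl ls) :
    uIoo (P.t m - P.a m * u) (P.t m - P.a m * v) ⊆ P.cyl (m :: ls) := by
  intro x hx
  obtain ⟨y, rfl⟩ : ∃ y, P.t m - P.a m * y = x :=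
    ⟨(P.t m - x) / P.a m, by rw [mul_div_cancel₀ _ (P.pos m hm).ne']; ring⟩
  have hy := (sub_mul_mem_uIoo_iff (P.pos m hm)).1 hx
  -- an open interval inside `C_α(ls) ⊆ (0, 1]` avoids `1`, whose image `t_{m+1}` is not in `A_m`
  have hy01 : y ∈ Ioo 0 1 :=
    interior_Ioc (a := (0 : ℝ)) ▸ interior_maximal (h.trans P.cyl_subset_Ioc) isOpen_Ioo hy
  rw [P.mem_cyl_cons_iff hm hls hpos, P.map_t_sub_a_mul hm (Ioo_subset_Ico_self hy01)]
  exact ⟨P.t_sub_a_mul_mem_atom hm (Ioo_subset_Ico_self hy01), h hy⟩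

theorem uIoo_val_subset_cyl (init : List ℕ) (hpos : ∀ k ∈ init ++ [l], 1 ≤ k) :
    uIoo (P.val (init ++ [l])) (P.val (init ++ [l + 1])) ⊆ P.cyl (init ++ [l]) := by
  induction init with
  | nil =>
    simp only [List.nil_append, val, mul_zero, sub_zero]
    rw [P.cyl_singleton (hpos l (by simp)), uIoo_of_ge (P.t_succ_lt (hpos l (by simp))).le]
    exact Ioo_subset_Ioc_self
  | cons m init ih =>
    exact P.uIoo_subset_cyl_cons (hpos m List.mem_cons_self) (by simp)
      (fun k hk => hpos k (List.mem_cons_of_mem m hk)) (ih fun k hk => hpos k (by simp [hk]))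

theorem cyl_subset_uIcc_val (init : List ℕ) (hpos : ∀ k ∈ init ++ [l], 1 ≤ k) :
    P.cyl (init ++ [l]) ⊆ uIcc (P.val (init ++ [l])) (P.val (init ++ [l + 1])) := by
  induction init with
  | nil =>
    simp only [List.nil_append, val, mul_zero, sub_zero]
    rw [P.cyl_singleton (hpos l (by simp)), uIcc_of_ge (P.t_succ_lt (hpos l (by simp))).le]
    exact Ioc_subset_Icc_self
  | cons m init ih =>
    exact P.cyl_cons_subset_uIcc (hpos m List.mem_cons_self) (by simp)
      (fun k hk => hpos k (List.mem_cons_of_mem m hk)) (ih fun k hk => hpos k (by simp [hk]))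

theorem prod_map_a_pos (hpos : ∀ k ∈ ls, 1 ≤ k) : 0 < (ls.map P.a).prod :=
  List.prod_pos fun _ ha => by
    obtain ⟨k, hk, rfl⟩ := List.mem_map.1 ha
    exact P.pos k (hpos k hk)

theorem abs_val_sub_val (init : List ℕ) (hpos : ∀ k ∈ init ++ [l], 1 ≤ k) :
    |P.val (init ++ [l + 1]) - P.val (init ++ [l])| = ((init ++ [l]).map P.a).prod := by
  induction init with
  | nil =>
    simp only [List.nil_append, val, mul_zero, sub_zero, List.map_cons, List.map_nil,
      List.prod_cons, List.prod_nil, mul_one]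
    rw [P.t_eq_a_add_t_succ (hpos l (by simp)), abs_sub_comm, add_sub_cancel_right,
      abs_of_pos (P.pos l (hpos l (by simp)))]
  | cons m init ih =>
    simp only [List.cons_append, val, List.map_cons, List.prod_cons]
    rw [sub_sub_sub_cancel_left, ← mul_sub, abs_mul, abs_of_pos (P.pos m (hpos m (by simp))),
      abs_sub_comm, ih fun k hk => hpos k (by simp [hk])]

end LurothData

theorem cylinder_interval_and_measure (P : LurothData) (ls : List ℕ)
    (hne : ls ≠ []) (hpos : ∀ l ∈ ls, 1 ≤ l) :
    closure (P.cyl ls)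
      = Set.uIcc (P.val ls) (P.val (ls.dropLast ++ [ls.getLast hne + 1])) ∧
    volume (P.cyl ls) = ENNReal.ofReal ((ls.map P.a).prod) := by
  obtain ⟨init, l, rfl⟩ := (List.eq_nil_or_concat' ls).resolve_left hne
  simp only [List.dropLast_concat, List.getLast_concat]
  have hIoo := P.uIoo_val_subset_cyl init hpos
  have hIcc := P.cyl_subset_uIcc_val init hpos
  have hlen := P.abs_val_sub_val init hpos
  have hval_ne : P.val (init ++ [l]) ≠ P.val (init ++ [l + 1]) := fun heq => by
    rw [heq, sub_self, abs_zero] at hlen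
    exact (P.prod_map_a_pos hpos).ne hlen
  refine ⟨closure_eq_uIcc_of_uIoo_subset hval_ne hIoo hIcc, ?_⟩
  rw [measure_eq_of_uIoo_subset hIoo hIcc, Real.volume_interval, hlen]
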